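/- arXiv:1004.2945 — 3 statements merged into one kernel-verified Lean document; each statement's English description precedes it below -/
import Mathlib

section
/- If g is a Lie algebra and R : g → g is a linear map satisfying the modified Yang–Baxter equation [Ra, Rb] − R([Ra,b] + [a,Rb]) = −c[a,b] for some scalar c and all a, b ∈ g, then the R-deformed bracket [a,b]_R := [Ra, b] + [a, Rb] is bilinear, antisymmetric, and satisfies the Jacobi identity, hence defines a Lie algebra structure on g. -/
/-- The `R`-deformed bracket `[a,b]_R = [Ra,b] + [a,Rb]`. -/
def brR {L : Type*} [LieRing L] [LieAlgebra ℂ L] (R : L →ₗ[ℂ] L) (a b : L) : L :=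
  ⁅R a, b⁆ + ⁅a, R b⁆

/-- If `R` satisfies the modified Yang-Baxter equation
`[Ra,Rb] - R([Ra,b]+[a,Rb]) = -c[a,b]`, then `[·,·]_R` is bilinear, antisymmetric
and satisfies the Jacobi identity, hence is a Lie bracket on `L`. -/
theorem brR_lie_structure {L : Type*} [LieRing L] [LieAlgebra ℂ L]
    (R : L →ₗ[ℂ] L) (c : ℂ)
    (hmYB : ∀ a b : L, ⁅R a, R b⁆ - R (⁅R a, b⁆ + ⁅a, R b⁆) = -c • ⁅a, b⁆) :
    (∀ a b z : L, brR R (a + b) z = brR R a z + brR R b z) ∧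
    (∀ (t : ℂ) (a b : L), brR R (t • a) b = t • brR R a b) ∧
    (∀ a b z : L, brR R a (b + z) = brR R a b + brR R a z) ∧
    (∀ (t : ℂ) (a b : L), brR R a (t • b) = t • brR R a b) ∧
    (∀ a b : L, brR R a b = -brR R b a) ∧
    (∀ a b z : L,
      brR R a (brR R b z) + brR R b (brR R z a) + brR R z (brR R a b) = 0) := by
  have hR : ∀ a b : L, R (⁅R a, b⁆ + ⁅a, R b⁆) = ⁅R a, R b⁆ + c • ⁅a, b⁆ := by
    intro a b
    have h := hmYB a b
    rw [sub_eq_iff_eq_add] at h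
    rw [h]; module
  refine ⟨?_, ?_, ?_, ?_, ?_, ?_⟩
  · intro a b z; simp [brR, add_lie, lie_add]; abel
  · intro t a b; simp [brR, smul_lie, lie_smul]
  · intro a b z; simp [brR, add_lie, lie_add]; abel
  · intro t a b; simp [brR, smul_lie, lie_smul]
  · intro a b; simp only [brR]
    rw [← lie_skew (R a) b, ← lie_skew a (R b)]; abel
  · intro a b z
    simp only [brR]
    rw [hR b z, hR z a, hR a b]
    simp only [lie_add, add_lie, lie_smul]
    have j1 := lie_jacobi (R a) (R b) z
    have j2 := lie_jacobi (R b) (R z) a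
    have j3 := lie_jacobi (R z) (R a) b
    have j4 := lie_jacobi a b z
    linear_combination (norm := module) j1 + j2 + j3 + c • j4
end

section
/- Let g be a Lie algebra with an ad-invariant symmetric bilinear form, decomposed as g = g_+ ⊕ g_−. If x and y commute with l ∈ g, then (l, [x,y]_R) = 0; that is, Casimir functionals are in involution with respect to the R-deformed Lie–Poisson bracket. -/
/-- Casimir functionals are in involution: if the symmetric bilinear form `B` is
ad-invariant and `x`, `y` commute with `l`, then `(l, [x,y]_R) = 0` for the
direct-sum `R`-matrix `R = (Pp - Pm)/2`. -/
theorem casimirs_in_involution {L : Type*} [LieRing L] [LieAlgebra ℂ L]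
    (B : L →ₗ[ℂ] L →ₗ[ℂ] ℂ)
    (hBsymm : ∀ a b : L, B a b = B b a)
    (hBinv : ∀ a b c : L, B ⁅a, b⁆ c = B a ⁅b, c⁆)
    (Pp Pm : L →ₗ[ℂ] L)
    (hsum : ∀ x, Pp x + Pm x = x)
    (hpp : ∀ x, Pp (Pp x) = Pp x) (hmm : ∀ x, Pm (Pm x) = Pm x)
    (hpm : ∀ x, Pp (Pm x) = 0) (hmp : ∀ x, Pm (Pp x) = 0)
    (hsubp : ∀ x y : L, Pm ⁅Pp x, Pp y⁆ = 0)
    (hsubm : ∀ x y : L, Pp ⁅Pm x, Pm y⁆ = 0)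
    (l x y : L) (hx : ⁅l, x⁆ = 0) (hy : ⁅l, y⁆ = 0) :
    B l (⁅((1/2 : ℂ) • (Pp - Pm)) x, y⁆ + ⁅x, ((1/2 : ℂ) • (Pp - Pm)) y⁆) = 0 := by
  have hzx : ∀ c : L, B l ⁅x, c⁆ = 0 := fun c => by
    rw [← hBinv, hx]; simp
  have hzy : ∀ c : L, B l ⁅c, y⁆ = 0 := fun c => by
    rw [← lie_skew, map_neg, ← hBinv, hy]; simp
  have hR : ∀ z : L, ((1/2 : ℂ) • (Pp - Pm)) z = Pp z - (1/2 : ℂ) • z := fun z => by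
    have h : Pm z = z - Pp z := by
      have := hsum z; exact eq_sub_of_add_eq' this
    simp only [LinearMap.smul_apply, LinearMap.sub_apply, h, smul_sub, sub_sub_cancel]
    module
  rw [hR x, hR y]
  simp only [sub_lie, lie_sub, smul_lie, lie_smul, map_add, map_sub, map_smul,
    hzx, hzy, smul_zero, sub_zero, zero_sub, neg_zero, add_zero, zero_add]
end

section
/- Suppose l and l̃ are related by the Bäcklund transformation l = l̃ + ∑_{i=1}^N f_i E (E−1)^{-1} f_i^*, where f_i E(E−1)^{-1} f_i^* denotes the operator g ↦ f_i · E (E−1)^{-1}(f_i^* g). If the variation of l at fixed l̃ is induced by variations δf_i, δf_i^*, then the pairing identity (X, δl) = ∑_i ( ⟨X_+^* f_i^*, δf_i⟩ + ⟨X_+ f_i, δf_i^*⟩ ) holds for every operator X in the Lie algebra of shift operators, where X_+ is the projection onto nonnegative powers of E. -/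
noncomputable section

/-- A shift operator `X = ∑_j a_j E^j` encoded by its coefficient sequences. -/
abbrev OpS := ℤ → ℤ → ℂ

/-- Product of shift operators via `E^j ∘ M_a = M_{E^j a} ∘ E^j`. -/
def opMulS (A B : OpS) : OpS := fun m n => ∑' j : ℤ, A j n * B (m - j) (n + j)

/-- Rapidly decreasing sequence (Schwartz class on `ℤ`). -/
def RapidDecay (a : ℤ → ℂ) : Prop :=
  ∀ k : ℕ, Summable fun n : ℤ => ‖a n‖ * (|n| : ℝ) ^ k

/-- Finitely many terms `a_j E^j`. -/
def FinOrders (A : OpS) : Prop := {j : ℤ | A j ≠ 0}.Finite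

/-- The trace pairing `(A,B) = Tr (AB)`, `Tr A = ∑_n a_0(n)`. -/
def pairOp (A B : OpS) : ℂ := ∑' n : ℤ, opMulS A B 0 n

/-- `X₊`: projection onto nonnegative powers of `E`. -/
def opPlus (X : OpS) : OpS := fun j n => if 0 ≤ j then X j n else 0

/-- Action of a shift operator on a sequence: `(X g)(n) = ∑_j X_j(n) g(n+j)`. -/
def opApply (X : OpS) (g : ℤ → ℂ) : ℤ → ℂ := fun n => ∑' j : ℤ, X j n * g (n + j)

/-- Action of the formal adjoint `X^* = ∑_j E^{-j} X_j`. -/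
def opAdjApply (X : OpS) (h : ℤ → ℂ) : ℤ → ℂ :=
  fun n => ∑' j : ℤ, X j (n - j) * h (n - j)

/-- The bilinear pairing `⟨u,v⟩ = ∑_n u(n) v(n)` on sequences. -/
def seqPair (u v : ℤ → ℂ) : ℂ := ∑' n : ℤ, u n * v n

/-- The operator `u E (E-1)⁻¹ v = ∑_{j ≤ 0} u · (E^j v) · E^j` appearing in the
Bäcklund transformation `l = l̃ + ∑_i f_i E (E-1)⁻¹ f_i^*`. -/
def btOp (u v : ℤ → ℂ) : OpS := fun j n => if j ≤ 0 then u n * v (n + j) else 0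

open Finset

/-! Both sides are finite sums, over the orders `j ≥ 0` of `X`, of the series
`∑ₙ X_j(n) u(n+j) v(n)`. For `⟨X₊ f, δf^*⟩` this series is literally the trace series of
`X · f E(E-1)⁻¹ δf^*`, since only the `E^{-j}`, `j ≥ 0`, part of `f E(E-1)⁻¹ δf^*` meets `X_j`;
for `⟨X₊^* f^*, δf⟩` it appears after the shift `n ↦ n + j`. Finiteness of the orders of `X`
and absolute summability of all sequences justify exchanging the sums. -/

lemma RapidDecay.summable_norm {a : ℤ → ℂ} (ha : RapidDecay a) : Summable fun n => ‖a n‖ := by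
  simpa using ha 0

lemma summable_mul_shift_mul {a g h : ℤ → ℂ} (ha : Summable fun n => ‖a n‖)
    (hg : Summable fun n => ‖g n‖) (hh : Summable fun n => ‖h n‖) (j : ℤ) :
    Summable fun n => a n * g (n + j) * h n := by
  refine Summable.of_norm_bounded (ha.mul_right ((∑' m, ‖g m‖) * ∑' m, ‖h m‖)) fun n => ?_
  rw [norm_mul, norm_mul, mul_assoc]
  have hg_nonneg : 0 ≤ ∑' m, ‖g m‖ := tsum_nonneg fun _ => norm_nonneg _
  gcongr
  exacts [hg.le_tsum _ fun _ _ => norm_nonneg _, hh.le_tsum _ fun _ _ => norm_nonneg _]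

lemma summable_opPlus_mul_shift_mul {X : OpS} {g h : ℤ → ℂ}
    (hX : ∀ j, Summable fun n => ‖X j n‖) (hg : Summable fun n => ‖g n‖)
    (hh : Summable fun n => ‖h n‖) (j : ℤ) :
    Summable fun n => opPlus X j n * g (n + j) * h n := by
  by_cases hj : 0 ≤ j
  · simpa only [opPlus, if_pos hj] using summable_mul_shift_mul (hX j) hg hh j
  · simpa only [opPlus, if_neg hj, zero_mul] using summable_zero

lemma opMulS_btOp_zero (A : OpS) (u v : ℤ → ℂ) (n : ℤ) :
    opMulS A (btOp u v) 0 n = opApply (opPlus A) u n * v n := by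
  rw [opApply, ← tsum_mul_right]
  refine tsum_congr fun j => ?_
  by_cases hj : 0 ≤ j
  · simp only [btOp, opPlus, if_pos hj, if_pos (show 0 - j ≤ 0 by omega)]
    rw [show n + j + (0 - j) = n by ring, mul_assoc]
  · simp [btOp, opPlus, hj]

theorem pairOp_btOp (A : OpS) (u v : ℤ → ℂ) :
    pairOp A (btOp u v) = seqPair (opApply (opPlus A) u) v :=
  tsum_congr (opMulS_btOp_zero A u v)

namespace FinOrders

variable {A : OpS} (hA : FinOrders A)
include hA

lemma opPlus : FinOrders (opPlus A) :=
  hA.subset fun j hj hAj => hj (funext fun n => by simp [_root_.opPlus, hAj])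

lemma tsum_eq_sum {F : ℤ → ℂ} (hF : ∀ j, A j = 0 → F j = 0) :
    ∑' j, F j = ∑ j ∈ hA.toFinset, F j :=
  _root_.tsum_eq_sum fun j hj => hF j (by_contra fun h => hj (hA.mem_toFinset.mpr h))

lemma opMulS_add_right (B C : OpS) (m n : ℤ) :
    opMulS A (B + C) m n = opMulS A B m n + opMulS A C m n := by
  simp only [opMulS]
  rw [hA.tsum_eq_sum, hA.tsum_eq_sum, hA.tsum_eq_sum, ← sum_add_distrib]
  · simp only [Pi.add_apply, mul_add]
  all_goals intro j hj; simp [hj]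

lemma opMulS_sum_right {ι : Type*} (s : Finset ι) (B : ι → OpS) (m n : ℤ) :
    opMulS A (∑ i ∈ s, B i) m n = ∑ i ∈ s, opMulS A (B i) m n := by
  simp only [opMulS]
  rw [hA.tsum_eq_sum]
  · simp only [Finset.sum_apply, mul_sum]
    rw [sum_comm]
    refine sum_congr rfl fun i _ => (hA.tsum_eq_sum fun j hj => by simp [hj]).symm
  · intro j hj; simp [hj]

lemma pairOp_add_right {B C : OpS} (hB : Summable fun n => opMulS A B 0 n)
    (hC : Summable fun n => opMulS A C 0 n) :
    pairOp A (B + C) = pairOp A B + pairOp A C := by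
  simp only [pairOp, hA.opMulS_add_right]
  exact hB.tsum_add hC

lemma pairOp_sum_right {ι : Type*} {s : Finset ι} {B : ι → OpS}
    (hB : ∀ i ∈ s, Summable fun n => opMulS A (B i) 0 n) :
    pairOp A (∑ i ∈ s, B i) = ∑ i ∈ s, pairOp A (B i) := by
  simp only [pairOp, hA.opMulS_sum_right]
  exact Summable.tsum_finsetSum hB

lemma opApply_mul_eq_sum (g h : ℤ → ℂ) (n : ℤ) :
    opApply A g n * h n = ∑ j ∈ hA.toFinset, A j n * g (n + j) * h n := by
  rw [opApply, hA.tsum_eq_sum fun j hj => by simp [hj], sum_mul]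

lemma opAdjApply_mul_eq_sum (g h : ℤ → ℂ) (n : ℤ) :
    opAdjApply A h n * g n = ∑ j ∈ hA.toFinset, A j (n - j) * h (n - j) * g n := by
  rw [opAdjApply, hA.tsum_eq_sum fun j hj => by simp [hj], sum_mul]

lemma summable_opApply_mul {g h : ℤ → ℂ}
    (hgh : ∀ j, Summable fun n => A j n * g (n + j) * h n) :
    Summable fun n => opApply A g n * h n := by
  simp only [hA.opApply_mul_eq_sum]
  exact summable_sum fun j _ => hgh j

theorem seqPair_opAdjApply {g h : ℤ → ℂ}
    (hgh : ∀ j, Summable fun n => A j n * g (n + j) * h n) :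
    seqPair (opAdjApply A h) g = seqPair (opApply A g) h := by
  have shift (j n : ℤ) :
      A j (n + j - j) * h (n + j - j) * g (n + j) = A j n * g (n + j) * h n := by
    rw [add_sub_cancel_right]; ring
  simp only [seqPair, hA.opAdjApply_mul_eq_sum, hA.opApply_mul_eq_sum]
  rw [Summable.tsum_finsetSum, Summable.tsum_finsetSum fun j _ => hgh j]
  · refine sum_congr rfl fun j _ => ?_
    rw [← (Equiv.addRight j).tsum_eq]
    exact tsum_congr (shift j)
  · intro j _
    rw [← (Equiv.addRight j).summable_iff]
    exact (hgh j).congr fun n => (shift j n).symm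

end FinOrders

/-- For the variation `δl = ∑_i ((δf_i) E(E-1)⁻¹ f_i^* + f_i E(E-1)⁻¹ δf_i^*)`
of the Bäcklund transformation at fixed `l̃`, one has for every shift operator `X`:
`(X, δl) = ∑_i (⟨X₊^* f_i^*, δf_i⟩ + ⟨X₊ f_i, δf_i^*⟩)`. -/
theorem backlund_variation_pairing (N : ℕ) (X : OpS)
    (hX : FinOrders X) (hXr : ∀ j, RapidDecay (X j))
    (f fs df dfs : Fin N → ℤ → ℂ)
    (hf : ∀ i, RapidDecay (f i)) (hfs : ∀ i, RapidDecay (fs i))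
    (hdf : ∀ i, RapidDecay (df i)) (hdfs : ∀ i, RapidDecay (dfs i)) :
    pairOp X (∑ i, (btOp (df i) (fs i) + btOp (f i) (dfs i)))
      = ∑ i, (seqPair (opAdjApply (opPlus X) (fs i)) (df i)
              + seqPair (opApply (opPlus X) (f i)) (dfs i)) := by
  have hterm {u v : ℤ → ℂ} (hu : RapidDecay u) (hv : RapidDecay v) (j : ℤ) :=
    summable_opPlus_mul_shift_mul (fun j => (hXr j).summable_norm) hu.summable_norm
      hv.summable_norm j
  have hsummand {u v : ℤ → ℂ} (hu : RapidDecay u) (hv : RapidDecay v) :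
      Summable fun n => opMulS X (btOp u v) 0 n := by
    simpa only [opMulS_btOp_zero] using hX.opPlus.summable_opApply_mul (hterm hu hv)
  rw [hX.pairOp_sum_right fun i _ => ?_]
  · refine sum_congr rfl fun i _ => ?_
    rw [hX.pairOp_add_right (hsummand (hdf i) (hfs i)) (hsummand (hf i) (hdfs i)),
      pairOp_btOp, pairOp_btOp, hX.opPlus.seqPair_opAdjApply (hterm (hdf i) (hfs i))]
  · simpa only [hX.opMulS_add_right] using
      (hsummand (hdf i) (hfs i)).add (hsummand (hf i) (hdfs i))
end
end
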